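/- Let G be an ordered graph with m edges, and define the variants L̄^{des,min}_G(q) := Σ_κ q^{des_G(min∘κ)} x^κ and L̄^{des,max}_G(q) := Σ_κ q^{des_G(max∘κ)} x^κ and L̄^{asc,min}_G(q) := Σ_κ q^{asc_G(min∘κ)} x^κ, each summed over proper set-valued colorings κ of G. Then: (i) L̄_G(q) = ρ(L̄^{des,min}_G(q)); (ii) L̄_G(q) = q^m · L̄^{des,max}_G(q^{-1}) (meaning: L̄_G(q) has degree m as a polynomial in q and equals the q-coefficient reversal of L̄^{des,max}_G(q)); and (iii) L̄_G(q) = ρ applied to the q-coefficient reversal of L̄^{asc,min}_G(q). Here ρ is the coefficientwise operator on power series under which, for every finite set of indices i_1 < i_2 < … < i_l and exponents a_1,…,a_l ≥ 1, the coefficient of x_{i_1}^{a_1} x_{i_2}^{a_2} ⋯ x_{i_l}^{a_l} in ρ(f) equals the coefficient of x_{i_1}^{a_l} x_{i_2}^{a_{l-1}} ⋯ x_{i_l}^{a_1} in f. -/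

import Mathlib

/-!
STATEMENT 10: Relations between the four variants of the kromatic quasisymmetric
function of an ordered graph `G` with `m` edges:
(i)   `L̄_G(q) = ρ(L̄^{des,min}_G(q))`;
(ii)  `L̄_G(q)` has degree `m` in `q` and equals the `q`-coefficient reversal of
      `L̄^{des,max}_G(q)`;
(iii) `L̄_G(q) = ρ` applied to the `q`-coefficient reversal of `L̄^{asc,min}_G(q)`.
Here `ρ` reverses the exponent sequence of each monomial, which is encoded by the
relation `MonRev` below, and the `q`-coefficient reversal is expressed through the
polynomial coefficients `coeff d ↔ coeff (m − d)`.
-/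

open scoped Classical
noncomputable section

/-- `m` is the monomial `x^κ` of the set-valued coloring `κ`. -/
def MonoMatch {W : Type*} (κ : W → Finset ℕ+) (m : ℕ+ →₀ ℕ) : Prop :=
  ∀ i : ℕ+, m i = Nat.card {w : W // i ∈ κ w}

/-- A proper set-valued coloring. -/
def IsProperSV {V : Type*} (G : SimpleGraph V) (κ : V → Finset ℕ+) : Prop :=
  (∀ v, (κ v).Nonempty) ∧ ∀ ⦃u v⦄, G.Adj u v → Disjoint (κ u) (κ v)

/-- Number of ascents of `f : V → ℙ`. -/
def ascNum {V : Type*} [Preorder V] (G : SimpleGraph V) (f : V → ℕ+) : ℕ :=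
  Nat.card {p : V × V // G.Adj p.1 p.2 ∧ p.1 < p.2 ∧ f p.1 < f p.2}

/-- Number of descents of `f : V → ℙ`. -/
def desNum {V : Type*} [Preorder V] (G : SimpleGraph V) (f : V → ℕ+) : ℕ :=
  Nat.card {p : V × V // G.Adj p.1 p.2 ∧ p.1 < p.2 ∧ f p.2 < f p.1}

/-- Maximum of a finite set of positive integers (junk value `1` on `∅`). -/
def maxColor (s : Finset ℕ+) : ℕ+ := WithBot.unbotD 1 s.max

/-- Minimum of a finite set of positive integers (junk value `1` on `∅`). -/
def minColor (s : Finset ℕ+) : ℕ+ := WithTop.untopD 1 s.min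

/-- `L̄_G(q) = L̄^{asc,max}_G(q) = Σ_κ q^{asc_G(max∘κ)} x^κ`, coefficientwise. -/
def kqL {V : Type*} [Preorder V] (G : SimpleGraph V) :
    MvPowerSeries ℕ+ (Polynomial ℤ) :=
  fun m => ∑ᶠ κ : {κ : V → Finset ℕ+ // IsProperSV G κ ∧ MonoMatch κ m},
    (Polynomial.X : Polynomial ℤ) ^ ascNum G (fun v => maxColor (κ.1 v))

/-- `L̄^{des,min}_G(q) = Σ_κ q^{des_G(min∘κ)} x^κ`. -/
def kqLdesmin {V : Type*} [Preorder V] (G : SimpleGraph V) :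
    MvPowerSeries ℕ+ (Polynomial ℤ) :=
  fun m => ∑ᶠ κ : {κ : V → Finset ℕ+ // IsProperSV G κ ∧ MonoMatch κ m},
    (Polynomial.X : Polynomial ℤ) ^ desNum G (fun v => minColor (κ.1 v))

/-- `L̄^{des,max}_G(q) = Σ_κ q^{des_G(max∘κ)} x^κ`. -/
def kqLdesmax {V : Type*} [Preorder V] (G : SimpleGraph V) :
    MvPowerSeries ℕ+ (Polynomial ℤ) :=
  fun m => ∑ᶠ κ : {κ : V → Finset ℕ+ // IsProperSV G κ ∧ MonoMatch κ m},
    (Polynomial.X : Polynomial ℤ) ^ desNum G (fun v => maxColor (κ.1 v))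

/-- `L̄^{asc,min}_G(q) = Σ_κ q^{asc_G(min∘κ)} x^κ`. -/
def kqLascmin {V : Type*} [Preorder V] (G : SimpleGraph V) :
    MvPowerSeries ℕ+ (Polynomial ℤ) :=
  fun m => ∑ᶠ κ : {κ : V → Finset ℕ+ // IsProperSV G κ ∧ MonoMatch κ m},
    (Polynomial.X : Polynomial ℤ) ^ ascNum G (fun v => minColor (κ.1 v))

/-- `m'` is the reversal of the monomial `m`: the supports agree, and the sequence of
exponents of `m'` along its increasingly sorted support is the reverse of that of `m`.
This is the monomial `x_{i_1}^{a_l} x_{i_2}^{a_{l-1}} ⋯ x_{i_l}^{a_1}` when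
`m = x_{i_1}^{a_1} ⋯ x_{i_l}^{a_l}` with `i_1 < ⋯ < i_l`. -/
def MonRev (m m' : ℕ+ →₀ ℕ) : Prop :=
  m'.support = m.support ∧
    (m'.support.sort (· ≤ ·)).map (fun i => m' i) =
      ((m.support.sort (· ≤ ·)).map (fun i => m i)).reverse


/-! ### Auxiliary development -/

section AuxRev

/-- The order-reversing involution of a finite set of positive integers
(identity outside the set). -/
def mrev (s : Finset ℕ+) (i : ℕ+) : ℕ+ :=
  if h : i ∈ s then
    ((s.orderIsoOfFin rfl) (Fin.rev ((s.orderIsoOfFin rfl).symm ⟨i, h⟩)) : ℕ+)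
  else i

lemma mrev_mem {s : Finset ℕ+} {i : ℕ+} (h : i ∈ s) : mrev s i ∈ s := by
  rw [mrev, dif_pos h]; exact Subtype.mem _

lemma mrev_of_not_mem {s : Finset ℕ+} {i : ℕ+} (h : i ∉ s) : mrev s i = i := dif_neg h

lemma mrev_apply_mem {s : Finset ℕ+} {i : ℕ+} (h : i ∈ s) :
    (⟨mrev s i, mrev_mem h⟩ : {x : ℕ+ // x ∈ s})
      = (s.orderIsoOfFin rfl) (Fin.rev ((s.orderIsoOfFin rfl).symm ⟨i, h⟩)) :=
  Subtype.ext (dif_pos h)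

lemma mrev_mrev (s : Finset ℕ+) (i : ℕ+) : mrev s (mrev s i) = i := by
  by_cases h : i ∈ s
  · have e2 := mrev_apply_mem (mrev_mem h)
    rw [mrev_apply_mem h] at e2
    simp only [OrderIso.symm_apply_apply, Fin.rev_rev, OrderIso.apply_symm_apply] at e2
    exact congrArg Subtype.val e2
  · rw [mrev_of_not_mem h, mrev_of_not_mem h]

lemma mrev_lt_mrev {s : Finset ℕ+} {i j : ℕ+} (hi : i ∈ s) (hj : j ∈ s) :
    mrev s i < mrev s j ↔ j < i := by
  rw [mrev, dif_pos hi, mrev, dif_pos hj, Subtype.coe_lt_coe, OrderIso.lt_iff_lt,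
    Fin.rev_lt_rev, OrderIso.lt_iff_lt, Subtype.mk_lt_mk]

lemma mrev_inj (s : Finset ℕ+) : Function.Injective (mrev s) := by
  intro a b hab
  rw [← mrev_mrev s a, hab, mrev_mrev]

lemma mrev_le_mrev {s : Finset ℕ+} {i j : ℕ+} (hi : i ∈ s) (hj : j ∈ s) :
    mrev s i ≤ mrev s j ↔ j ≤ i := by
  rw [← not_lt, ← not_lt, mrev_lt_mrev hj hi]

lemma getElem_index_congr {α : Type*} (l : List α) {a b : ℕ} (h : a = b)
    (ha : a < l.length) : l[a]'ha = l[b]'(h ▸ ha) := by subst h; rfl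

lemma mrev_sort (s : Finset ℕ+) {k : ℕ} (hk : k < (s.sort (· ≤ ·)).length) :
    mrev s ((s.sort (· ≤ ·))[k]'hk) =
      (s.sort (· ≤ ·))[(s.sort (· ≤ ·)).length - 1 - k]'(by omega) := by
  have hlen : (s.sort (· ≤ ·)).length = s.card := Finset.length_sort _
  have hmem : (s.sort (· ≤ ·))[k]'hk ∈ s := (Finset.mem_sort _).1 (List.getElem_mem hk)
  have hk' : k < s.card := hlen ▸ hk
  have h1 : s.orderIsoOfFin rfl ⟨k, hk'⟩ = ⟨(s.sort (· ≤ ·))[k]'hk, hmem⟩ :=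
    Subtype.ext (s.orderEmbOfFin_apply rfl ⟨k, hk'⟩)
  rw [mrev, dif_pos hmem, ← h1, OrderIso.symm_apply_apply]
  have h2 : (↑(s.orderIsoOfFin rfl (Fin.rev ⟨k, hk'⟩)) : ℕ+) =
      (s.sort (· ≤ ·))[((Fin.rev (⟨k, hk'⟩ : Fin s.card)) : Fin s.card).val]'
        (by rw [hlen]; exact (Fin.rev _).isLt) :=
    s.orderEmbOfFin_apply rfl _
  rw [h2]
  refine getElem_index_congr _ ?_ _
  rw [Fin.val_rev]
  show s.card - (k + 1) = (s.sort (· ≤ ·)).length - 1 - k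
  omega

lemma monRev_apply {m m' : ℕ+ →₀ ℕ} (h : MonRev m m') (i : ℕ+) :
    m' i = m (mrev m.support i) := by
  by_cases hi : i ∈ m.support
  · have hmap : (m.support.sort (· ≤ ·)).map (fun i => m' i) =
        ((m.support.sort (· ≤ ·)).map (fun i => m i)).reverse := by
      have h2 := h.2; rwa [h.1] at h2
    obtain ⟨k, hk, hki⟩ :=
      List.mem_iff_getElem.1 ((Finset.mem_sort (α := ℕ+) (· ≤ ·)).2 hi)
    have hk1 : k < ((m.support.sort (· ≤ ·)).map (fun i => m' i)).length := by
      simpa using hk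
    have hk2 : k < (((m.support.sort (· ≤ ·)).map (fun i => m i)).reverse).length := by
      simpa using hk
    have e1 := List.getElem_of_eq hmap hk1
    rw [List.getElem_map, List.getElem_reverse, List.getElem_map] at e1
    rw [← hki, e1, mrev_sort]
    refine congrArg m (getElem_index_congr _ ?_ _)
    simp
  · have h1 : i ∉ m'.support := by rw [h.1]; exact hi
    rw [Finsupp.notMem_support_iff.1 h1, mrev_of_not_mem hi,
      Finsupp.notMem_support_iff.1 hi]

/-! ### Color extrema -/

lemma maxColor_eq_max' {s : Finset ℕ+} (h : s.Nonempty) : maxColor s = s.max' h := by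
  rw [maxColor, ← Finset.coe_max' h, WithBot.unbotD_coe]

lemma minColor_eq_min' {s : Finset ℕ+} (h : s.Nonempty) : minColor s = s.min' h := by
  rw [minColor, ← Finset.coe_min' h, WithTop.untopD_coe]

lemma maxColor_mem {s : Finset ℕ+} (h : s.Nonempty) : maxColor s ∈ s := by
  rw [maxColor_eq_max' h]; exact s.max'_mem h

lemma minColor_mem {s : Finset ℕ+} (h : s.Nonempty) : minColor s ∈ s := by
  rw [minColor_eq_min' h]; exact s.min'_mem h

lemma minColor_image_mrev {s t : Finset ℕ+} (ht : t.Nonempty) (hts : t ⊆ s) :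
    minColor (t.image (mrev s)) = mrev s (maxColor t) := by
  have ht' : (t.image (mrev s)).Nonempty := ht.image _
  rw [minColor_eq_min' ht', maxColor_eq_max' ht]
  apply le_antisymm
  · exact Finset.min'_le _ _ (Finset.mem_image_of_mem _ (t.max'_mem ht))
  · apply Finset.le_min'
    intro y hy
    obtain ⟨x, hx, rfl⟩ := Finset.mem_image.1 hy
    exact (mrev_le_mrev (hts (t.max'_mem ht)) (hts hx)).2 (t.le_max' x hx)

lemma maxColor_image_mrev {s t : Finset ℕ+} (ht : t.Nonempty) (hts : t ⊆ s) :
    maxColor (t.image (mrev s)) = mrev s (minColor t) := by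
  have ht' : (t.image (mrev s)).Nonempty := ht.image _
  rw [maxColor_eq_max' ht', minColor_eq_min' ht]
  apply le_antisymm
  · apply Finset.max'_le
    intro y hy
    obtain ⟨x, hx, rfl⟩ := Finset.mem_image.1 hy
    exact (mrev_le_mrev (hts hx) (hts (t.min'_mem ht))).2 (t.min'_le x hx)
  · exact Finset.le_max' _ _ (Finset.mem_image_of_mem _ (t.min'_mem ht))

/-! ### Colorings with a fixed monomial -/

variable {V : Type*} [Fintype V]

lemma subset_support {κ : V → Finset ℕ+} {m : ℕ+ →₀ ℕ} (h : MonoMatch κ m) (v : V) :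
    κ v ⊆ m.support := by
  intro i hi
  rw [Finsupp.mem_support_iff, h i, Nat.card_ne_zero]
  exact ⟨⟨⟨v, hi⟩⟩, inferInstance⟩

instance colorings_finite (G : SimpleGraph V) (m : ℕ+ →₀ ℕ) :
    Finite {κ : V → Finset ℕ+ // IsProperSV G κ ∧ MonoMatch κ m} := by
  let F : {κ : V → Finset ℕ+ // IsProperSV G κ ∧ MonoMatch κ m} →
      (V → {t : Finset ℕ+ // t ∈ m.support.powerset}) :=
    fun κ v => ⟨κ.1 v, Finset.mem_powerset.2 (subset_support κ.2.2 v)⟩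
  have hF : Function.Injective F := by
    intro a b hab
    apply Subtype.ext
    funext v
    exact congrArg Subtype.val (congrFun hab v)
  exact Finite.of_injective F hF

lemma isProperSV_image (G : SimpleGraph V) {κ : V → Finset ℕ+}
    (hκ : IsProperSV G κ) (s : Finset ℕ+) :
    IsProperSV G (fun v => (κ v).image (mrev s)) :=
  ⟨fun v => (hκ.1 v).image _,
   fun _ _ h => (Finset.disjoint_image (mrev_inj s)).2 (hκ.2 h)⟩

lemma monoMatch_image {κ : V → Finset ℕ+} {μ ν : ℕ+ →₀ ℕ} (s : Finset ℕ+)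
    (hκ : MonoMatch κ μ) (hν : ∀ i, ν i = μ (mrev s i)) :
    MonoMatch (fun v => (κ v).image (mrev s)) ν := by
  intro i
  rw [hν i, hκ (mrev s i)]
  apply Nat.card_congr
  apply Equiv.subtypeEquivRight
  intro w
  constructor
  · intro hw
    exact Finset.mem_image.2 ⟨mrev s i, hw, mrev_mrev s i⟩
  · intro hw
    obtain ⟨a, ha, haa⟩ := Finset.mem_image.1 hw
    rwa [← haa, mrev_mrev]

lemma finsum_monRev (G : SimpleGraph V) {m m' : ℕ+ →₀ ℕ}
    (h : MonRev m m') {M : Type*} [AddCommMonoid M]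
    (g g' : (V → Finset ℕ+) → M)
    (hg : ∀ κ, IsProperSV G κ → MonoMatch κ m →
      g κ = g' (fun v => (κ v).image (mrev m.support))) :
    (∑ᶠ κ : {κ : V → Finset ℕ+ // IsProperSV G κ ∧ MonoMatch κ m}, g κ.1)
      = ∑ᶠ κ : {κ : V → Finset ℕ+ // IsProperSV G κ ∧ MonoMatch κ m'}, g' κ.1 := by
  have hmm' : ∀ i, m' i = m (mrev m.support i) := monRev_apply h
  have hm'm : ∀ i, m i = m' (mrev m.support i) := fun i => by
    rw [hmm' (mrev m.support i), mrev_mrev]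
  have himg : ∀ t : Finset ℕ+, (t.image (mrev m.support)).image (mrev m.support) = t := by
    intro t
    rw [Finset.image_image]
    have h2 : mrev m.support ∘ mrev m.support = id := funext (mrev_mrev m.support)
    rw [h2, Finset.image_id]
  refine finsum_eq_of_bijective
    (fun κ => ⟨fun v => (κ.1 v).image (mrev m.support),
      isProperSV_image G κ.2.1 _, monoMatch_image _ κ.2.2 hmm'⟩) ⟨?_, ?_⟩
    (fun κ => hg κ.1 κ.2.1 κ.2.2)
  · intro a b hab
    apply Subtype.ext
    funext v
    have h3 := congrArg (fun F : {κ : V → Finset ℕ+ // IsProperSV G κ ∧ MonoMatch κ m'}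
      => (F.1 v).image (mrev m.support)) hab
    simpa [himg] using h3
  · intro κ'
    refine ⟨⟨fun v => (κ'.1 v).image (mrev m.support),
      isProperSV_image G κ'.2.1 _, monoMatch_image _ κ'.2.2 hm'm⟩, ?_⟩
    apply Subtype.ext
    funext v
    exact himg _

/-! ### Edge counting -/

lemma card_pairs [LinearOrder V] (G : SimpleGraph V) :
    Nat.card {p : V × V // G.Adj p.1 p.2 ∧ p.1 < p.2} = Nat.card G.edgeSet := by
  apply Nat.card_eq_of_bijective
    (fun p => (⟨s(p.1.1, p.1.2), p.2.1⟩ : G.edgeSet))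
  constructor
  · rintro ⟨⟨a, b⟩, ⟨hab, hlt⟩⟩ ⟨⟨c, d⟩, ⟨hcd, hlt'⟩⟩ hh
    simp only [Subtype.mk.injEq, Sym2.eq_iff] at hh
    obtain ⟨rfl, rfl⟩ | ⟨rfl, rfl⟩ := Sym2.eq_iff.1 (congrArg Subtype.val hh)
    · rfl
    · exact absurd (hlt.trans hlt') (lt_irrefl _)
  · rintro ⟨e, he⟩
    induction e with
    | h a b =>
      rw [SimpleGraph.mem_edgeSet] at he
      rcases lt_or_gt_of_ne he.ne with hlt | hlt
      · exact ⟨⟨(a, b), he, hlt⟩, rfl⟩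
      · exact ⟨⟨(b, a), he.symm, hlt⟩, Subtype.ext (Sym2.eq_swap)⟩

lemma asc_add_des [LinearOrder V] (G : SimpleGraph V) {f : V → ℕ+}
    (hf : ∀ ⦃u v⦄, G.Adj u v → f u ≠ f v) :
    ascNum G f + desNum G f = Nat.card {p : V × V // G.Adj p.1 p.2 ∧ p.1 < p.2} := by
  classical
  have key : ∀ p : V × V, G.Adj p.1 p.2 → (f p.2 < f p.1 ↔ ¬ f p.1 < f p.2) := by
    intro p hadj
    constructor
    · exact fun h1 h2 => lt_asymm h1 h2
    · intro h1
      exact lt_of_le_of_ne (not_lt.1 h1) (Ne.symm (hf hadj))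
  rw [ascNum, desNum, Nat.card_eq_fintype_card, Nat.card_eq_fintype_card,
    Nat.card_eq_fintype_card]
  simp only [Fintype.card_subtype]
  rw [show (Finset.univ.filter fun p : V × V => G.Adj p.1 p.2 ∧ p.1 < p.2 ∧ f p.1 < f p.2)
      = (Finset.univ.filter fun p : V × V => G.Adj p.1 p.2 ∧ p.1 < p.2).filter
          (fun p => f p.1 < f p.2) by
    rw [Finset.filter_filter]; ext p; simp [and_assoc]]
  rw [show (Finset.univ.filter fun p : V × V => G.Adj p.1 p.2 ∧ p.1 < p.2 ∧ f p.2 < f p.1)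
      = (Finset.univ.filter fun p : V × V => G.Adj p.1 p.2 ∧ p.1 < p.2).filter
          (fun p => ¬ f p.1 < f p.2) by
    rw [Finset.filter_filter]; ext p
    simp only [Finset.mem_filter, Finset.mem_univ, true_and, and_assoc]
    constructor
    · rintro ⟨h1, h2, h3⟩; exact ⟨h1, h2, (key p h1).1 h3⟩
    · rintro ⟨h1, h2, h3⟩; exact ⟨h1, h2, (key p h1).2 h3⟩]
  exact Finset.card_filter_add_card_filter_not _

lemma max_ne (G : SimpleGraph V) {κ : V → Finset ℕ+} (hκ : IsProperSV G κ) :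
    ∀ ⦃u v⦄, G.Adj u v → maxColor (κ u) ≠ maxColor (κ v) := by
  intro u v huv heq
  have h1 := maxColor_mem (hκ.1 u)
  have h2 := maxColor_mem (hκ.1 v)
  rw [heq] at h1
  exact Finset.disjoint_left.1 (hκ.2 huv) h1 h2

lemma min_ne (G : SimpleGraph V) {κ : V → Finset ℕ+} (hκ : IsProperSV G κ) :
    ∀ ⦃u v⦄, G.Adj u v → minColor (κ u) ≠ minColor (κ v) := by
  intro u v huv heq
  have h1 := minColor_mem (hκ.1 u)
  have h2 := minColor_mem (hκ.1 v)
  rw [heq] at h1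
  exact Finset.disjoint_left.1 (hκ.2 huv) h1 h2

/-! ### Statistic transfers under the reversal -/

lemma asc_max_eq_des_min [LinearOrder V] (G : SimpleGraph V) {κ : V → Finset ℕ+}
    {m : ℕ+ →₀ ℕ} (hκ : IsProperSV G κ) (hm : MonoMatch κ m) :
    ascNum G (fun v => maxColor (κ v))
      = desNum G (fun v => minColor ((κ v).image (mrev m.support))) := by
  apply Nat.card_congr
  apply Equiv.subtypeEquivRight
  intro p
  have key : ∀ v, minColor ((κ v).image (mrev m.support))
      = mrev m.support (maxColor (κ v)) :=
    fun v => minColor_image_mrev (hκ.1 v) (subset_support hm v)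
  have h1 : maxColor (κ p.1) ∈ m.support :=
    subset_support hm _ (maxColor_mem (hκ.1 p.1))
  have h2 : maxColor (κ p.2) ∈ m.support :=
    subset_support hm _ (maxColor_mem (hκ.1 p.2))
  simp only [key]
  rw [mrev_lt_mrev h2 h1]

lemma des_max_eq_asc_min [LinearOrder V] (G : SimpleGraph V) {κ : V → Finset ℕ+}
    {m : ℕ+ →₀ ℕ} (hκ : IsProperSV G κ) (hm : MonoMatch κ m) :
    desNum G (fun v => maxColor (κ v))
      = ascNum G (fun v => minColor ((κ v).image (mrev m.support))) := by
  apply Nat.card_congr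
  apply Equiv.subtypeEquivRight
  intro p
  have key : ∀ v, minColor ((κ v).image (mrev m.support))
      = mrev m.support (maxColor (κ v)) :=
    fun v => minColor_image_mrev (hκ.1 v) (subset_support hm v)
  have h1 : maxColor (κ p.1) ∈ m.support :=
    subset_support hm _ (maxColor_mem (hκ.1 p.1))
  have h2 : maxColor (κ p.2) ∈ m.support :=
    subset_support hm _ (maxColor_mem (hκ.1 p.2))
  simp only [key]
  rw [mrev_lt_mrev h1 h2]

lemma coeff_finsum {α : Type*} [Finite α] (f : α → Polynomial ℤ) (d : ℕ) :
    (∑ᶠ a, f a).coeff d = ∑ᶠ a, (f a).coeff d := by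
  have h := AddMonoidHom.map_finsum (f := f)
    (Polynomial.lcoeff ℤ d).toAddMonoidHom (Set.toFinite _)
  simpa using h

end AuxRev

/-! ### Unfolding lemmas -/

lemma coeff_kqL {V : Type*} [Preorder V] (G : SimpleGraph V) (m : ℕ+ →₀ ℕ) :
    MvPowerSeries.coeff (R := Polynomial ℤ) m (kqL G)
      = ∑ᶠ κ : {κ : V → Finset ℕ+ // IsProperSV G κ ∧ MonoMatch κ m},
          (Polynomial.X : Polynomial ℤ) ^ ascNum G (fun v => maxColor (κ.1 v)) := rfl

lemma coeff_kqLdesmin {V : Type*} [Preorder V] (G : SimpleGraph V) (m : ℕ+ →₀ ℕ) :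
    MvPowerSeries.coeff (R := Polynomial ℤ) m (kqLdesmin G)
      = ∑ᶠ κ : {κ : V → Finset ℕ+ // IsProperSV G κ ∧ MonoMatch κ m},
          (Polynomial.X : Polynomial ℤ) ^ desNum G (fun v => minColor (κ.1 v)) := rfl

lemma coeff_kqLdesmax {V : Type*} [Preorder V] (G : SimpleGraph V) (m : ℕ+ →₀ ℕ) :
    MvPowerSeries.coeff (R := Polynomial ℤ) m (kqLdesmax G)
      = ∑ᶠ κ : {κ : V → Finset ℕ+ // IsProperSV G κ ∧ MonoMatch κ m},
          (Polynomial.X : Polynomial ℤ) ^ desNum G (fun v => maxColor (κ.1 v)) := rfl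

lemma coeff_kqLascmin {V : Type*} [Preorder V] (G : SimpleGraph V) (m : ℕ+ →₀ ℕ) :
    MvPowerSeries.coeff (R := Polynomial ℤ) m (kqLascmin G)
      = ∑ᶠ κ : {κ : V → Finset ℕ+ // IsProperSV G κ ∧ MonoMatch κ m},
          (Polynomial.X : Polynomial ℤ) ^ ascNum G (fun v => minColor (κ.1 v)) := rfl

/-- Symmetries among the four variants of `L̄_G(q)`. -/
theorem kqL_variants {V : Type*} [Fintype V] [LinearOrder V] (G : SimpleGraph V)
    (E : ℕ) (hE : E = Nat.card G.edgeSet) :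
    -- (i)  `L̄_G(q) = ρ(L̄^{des,min}_G(q))`
    (∀ m m' : ℕ+ →₀ ℕ, MonRev m m' →
      MvPowerSeries.coeff (R := Polynomial ℤ) m (kqL G) =
        MvPowerSeries.coeff (R := Polynomial ℤ) m' (kqLdesmin G)) ∧
    -- (ii) `L̄_G(q)` has degree `E` in `q` and is the `q`-reversal of `L̄^{des,max}_G(q)`
    ((∀ (m : ℕ+ →₀ ℕ) (d : ℕ), E < d →
        (MvPowerSeries.coeff (R := Polynomial ℤ) m (kqL G)).coeff d = 0 ∧
        (MvPowerSeries.coeff (R := Polynomial ℤ) m (kqLdesmax G)).coeff d = 0) ∧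
     (∃ m : ℕ+ →₀ ℕ, (MvPowerSeries.coeff (R := Polynomial ℤ) m (kqL G)).coeff E ≠ 0) ∧
     (∀ (m : ℕ+ →₀ ℕ) (d : ℕ), d ≤ E →
        (MvPowerSeries.coeff (R := Polynomial ℤ) m (kqL G)).coeff d =
          (MvPowerSeries.coeff (R := Polynomial ℤ) m (kqLdesmax G)).coeff (E - d))) ∧
    -- (iii) `L̄_G(q) = ρ` of the `q`-reversal of `L̄^{asc,min}_G(q)`
    ((∀ (m : ℕ+ →₀ ℕ) (d : ℕ), E < d →
        (MvPowerSeries.coeff (R := Polynomial ℤ) m (kqLascmin G)).coeff d = 0) ∧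
     (∀ (m m' : ℕ+ →₀ ℕ) (d : ℕ), MonRev m m' → d ≤ E →
        (MvPowerSeries.coeff (R := Polynomial ℤ) m (kqL G)).coeff d =
          (MvPowerSeries.coeff (R := Polynomial ℤ) m' (kqLascmin G)).coeff (E - d))) := by
  classical
  have hEcard : Nat.card {p : V × V // G.Adj p.1 p.2 ∧ p.1 < p.2} = E := by
    rw [hE, card_pairs]
  have hsum_max : ∀ (κ : V → Finset ℕ+), IsProperSV G κ →
      ascNum G (fun v => maxColor (κ v)) + desNum G (fun v => maxColor (κ v)) = E :=
    fun κ hκ => by rw [asc_add_des G (max_ne G hκ), hEcard]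
  have hsum_min : ∀ (κ : V → Finset ℕ+), IsProperSV G κ →
      ascNum G (fun v => minColor (κ v)) + desNum G (fun v => minColor (κ v)) = E :=
    fun κ hκ => by rw [asc_add_des G (min_ne G hκ), hEcard]
  -- (i)
  have part1 : ∀ m m' : ℕ+ →₀ ℕ, MonRev m m' →
      MvPowerSeries.coeff (R := Polynomial ℤ) m (kqL G) =
        MvPowerSeries.coeff (R := Polynomial ℤ) m' (kqLdesmin G) := by
    intro m m' hmm'
    rw [coeff_kqL, coeff_kqLdesmin]
    exact finsum_monRev G hmm'
      (fun κ => (Polynomial.X : Polynomial ℤ) ^ ascNum G (fun v => maxColor (κ v)))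
      (fun κ => (Polynomial.X : Polynomial ℤ) ^ desNum G (fun v => minColor (κ v)))
      (fun κ h1 h2 =>
        congrArg (fun n => (Polynomial.X : Polynomial ℤ) ^ n)
          (asc_max_eq_des_min G h1 h2))
  -- (ii): vanishing above degree E
  have part2a : ∀ (m : ℕ+ →₀ ℕ) (d : ℕ), E < d →
      (MvPowerSeries.coeff (R := Polynomial ℤ) m (kqL G)).coeff d = 0 ∧
      (MvPowerSeries.coeff (R := Polynomial ℤ) m (kqLdesmax G)).coeff d = 0 := by
    intro m d hd
    constructor
    · rw [coeff_kqL, coeff_finsum]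
      apply finsum_eq_zero_of_forall_eq_zero
      intro κ
      rw [Polynomial.coeff_X_pow, if_neg]
      have h1 : ascNum G (fun v => maxColor (κ.1 v)) ≤ E :=
        Nat.le.intro (hsum_max κ.1 κ.2.1)
      omega
    · rw [coeff_kqLdesmax, coeff_finsum]
      apply finsum_eq_zero_of_forall_eq_zero
      intro κ
      rw [Polynomial.coeff_X_pow, if_neg]
      have h1 : desNum G (fun v => maxColor (κ.1 v)) ≤ E :=
        Nat.le.intro (by rw [Nat.add_comm]; exact hsum_max κ.1 κ.2.1)
      omega
  -- (ii): the coefficient of q^E is nonzero for some monomial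
  have part2b : ∃ m : ℕ+ →₀ ℕ,
      (MvPowerSeries.coeff (R := Polynomial ℤ) m (kqL G)).coeff E ≠ 0 := by
    set e := (Finset.univ : Finset V).orderIsoOfFin rfl with he
    set ι : V → ℕ+ :=
      fun v => ⟨(e.symm ⟨v, Finset.mem_univ v⟩ : Fin _).val + 1, Nat.succ_pos _⟩ with hiota
    have hι : StrictMono ι := by
      intro u v huv
      have h1 : e.symm ⟨u, Finset.mem_univ u⟩ < e.symm ⟨v, Finset.mem_univ v⟩ := by
        rw [OrderIso.lt_iff_lt]
        exact Subtype.mk_lt_mk.2 huv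
      exact (PNat.mk_lt_mk _ _ _ _).2 (Nat.succ_lt_succ (Fin.lt_def.1 h1))
    have hprop : IsProperSV G (fun v => ({ι v} : Finset ℕ+)) :=
      ⟨fun v => Finset.singleton_nonempty _,
       fun u v huv => Finset.disjoint_singleton.2
         fun hh => huv.ne (hι.injective hh)⟩
    set m₀ : ℕ+ →₀ ℕ := ∑ v : V, Finsupp.single (ι v) 1 with hm₀
    have hmatch : MonoMatch (fun v => ({ι v} : Finset ℕ+)) m₀ := by
      intro i
      have hcount : Nat.card {w : V // i ∈ (fun v => ({ι v} : Finset ℕ+)) w}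
          = (Finset.univ.filter (fun w : V => ι w = i)).card := by
        rw [Nat.card_eq_fintype_card, Fintype.card_subtype]
        apply congrArg Finset.card
        apply Finset.filter_congr
        intro w _
        simp [eq_comm]
      rw [hcount, Finset.card_filter, hm₀, Finsupp.finset_sum_apply]
      exact Finset.sum_congr rfl fun v _ => Finsupp.single_apply
    have hasc0 : ascNum G (fun v => maxColor ((fun v => ({ι v} : Finset ℕ+)) v)) = E := by
      have hmax : ∀ v : V, maxColor ({ι v} : Finset ℕ+) = ι v := fun v => by
        rw [maxColor_eq_max' (Finset.singleton_nonempty _)]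
        exact Finset.max'_singleton _
      rw [ascNum, ← hEcard]
      apply Nat.card_congr
      apply Equiv.subtypeEquivRight
      intro p
      simp only [hmax]
      constructor
      · rintro ⟨a, b, c⟩; exact ⟨a, b⟩
      · rintro ⟨a, b⟩; exact ⟨a, b, hι b⟩
    refine ⟨m₀, ?_⟩
    rw [coeff_kqL, coeff_finsum]
    haveI : Fintype {κ : V → Finset ℕ+ // IsProperSV G κ ∧ MonoMatch κ m₀} :=
      Fintype.ofFinite _
    rw [finsum_eq_sum_of_fintype]
    apply ne_of_gt
    apply Finset.sum_pos'
    · intro κ _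
      rw [Polynomial.coeff_X_pow]
      split <;> norm_num
    · refine ⟨⟨fun v => ({ι v} : Finset ℕ+), hprop, hmatch⟩, Finset.mem_univ _, ?_⟩
      rw [Polynomial.coeff_X_pow, if_pos hasc0.symm]
      norm_num
  -- (ii): coefficient reversal
  have part2c : ∀ (m : ℕ+ →₀ ℕ) (d : ℕ), d ≤ E →
      (MvPowerSeries.coeff (R := Polynomial ℤ) m (kqL G)).coeff d =
        (MvPowerSeries.coeff (R := Polynomial ℤ) m (kqLdesmax G)).coeff (E - d) := by
    intro m d hdE
    rw [coeff_kqL, coeff_kqLdesmax, coeff_finsum, coeff_finsum]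
    apply finsum_congr
    intro κ
    rw [Polynomial.coeff_X_pow, Polynomial.coeff_X_pow]
    have hs := hsum_max κ.1 κ.2.1
    have hiff : (d = ascNum G fun v => maxColor (κ.1 v)) ↔
        (E - d = desNum G fun v => maxColor (κ.1 v)) := by omega
    exact if_congr hiff rfl rfl
  -- (iii): vanishing above degree E
  have part3a : ∀ (m : ℕ+ →₀ ℕ) (d : ℕ), E < d →
      (MvPowerSeries.coeff (R := Polynomial ℤ) m (kqLascmin G)).coeff d = 0 := by
    intro m d hd
    rw [coeff_kqLascmin, coeff_finsum]
    apply finsum_eq_zero_of_forall_eq_zero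
    intro κ
    rw [Polynomial.coeff_X_pow, if_neg]
    have h1 : ascNum G (fun v => minColor (κ.1 v)) ≤ E :=
      Nat.le.intro (hsum_min κ.1 κ.2.1)
    omega
  -- (iii): main identity
  have part3b : ∀ (m m' : ℕ+ →₀ ℕ) (d : ℕ), MonRev m m' → d ≤ E →
      (MvPowerSeries.coeff (R := Polynomial ℤ) m (kqL G)).coeff d =
        (MvPowerSeries.coeff (R := Polynomial ℤ) m' (kqLascmin G)).coeff (E - d) := by
    intro m m' d hrev hdE
    have hpoly : MvPowerSeries.coeff (R := Polynomial ℤ) m (kqLdesmax G)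
        = MvPowerSeries.coeff (R := Polynomial ℤ) m' (kqLascmin G) := by
      rw [coeff_kqLdesmax, coeff_kqLascmin]
      exact finsum_monRev G hrev
        (fun κ => (Polynomial.X : Polynomial ℤ) ^ desNum G (fun v => maxColor (κ v)))
        (fun κ => (Polynomial.X : Polynomial ℤ) ^ ascNum G (fun v => minColor (κ v)))
        (fun κ h1 h2 =>
          congrArg (fun n => (Polynomial.X : Polynomial ℤ) ^ n)
            (des_max_eq_asc_min G h1 h2))
    rw [part2c m d hdE, hpoly]
  exact ⟨part1, ⟨part2a, part2b, part2c⟩, part3a, part3b⟩
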